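/- arXiv:math/0606555 — 3 statements merged into one kernel-verified Lean document; each statement's English description precedes it below -/
import Mathlib

section
/- Let ξ₁, ξ₂, τ₁, τ₂ ∈ ℝ with ξ₁ξ₂ ≥ 0, and let e, e₃ ∈ {−1, +1}. Set σ₁ = τ₁ + e|ξ₁|, σ₂ = τ₂ − e|ξ₂| and σ = (τ₁+τ₂) + e₃|ξ₁+ξ₂|. Then 2·min(|ξ₁|, |ξ₂|) ≤ |σ₁| + |σ₂| + |σ|. -/
theorem stmt5 (ξ₁ ξ₂ τ₁ τ₂ : ℝ) (hξ : 0 ≤ ξ₁ * ξ₂)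
    (e e₃ : ℝ) (he : e = 1 ∨ e = -1) (he₃ : e₃ = 1 ∨ e₃ = -1) :
    2 * min |ξ₁| |ξ₂| ≤
      abs (τ₁ + e * |ξ₁|) + abs (τ₂ - e * |ξ₂|) + abs ((τ₁ + τ₂) + e₃ * |ξ₁ + ξ₂|) := by
  have habs : |ξ₁ + ξ₂| = |ξ₁| + |ξ₂| := by
    rcases le_total 0 ξ₁ with h1 | h1 <;> rcases le_total 0 ξ₂ with h2 | h2
    · rw [abs_of_nonneg h1, abs_of_nonneg h2, abs_of_nonneg (by linarith)]
    · have h0 : ξ₁ * ξ₂ = 0 := le_antisymm (mul_nonpos_of_nonneg_of_nonpos h1 h2) hξ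
      rcases mul_eq_zero.1 h0 with rfl | rfl <;> simp
    · have h0 : ξ₁ * ξ₂ = 0 := le_antisymm (mul_nonpos_of_nonpos_of_nonneg h1 h2) hξ
      rcases mul_eq_zero.1 h0 with rfl | rfl <;> simp
    · rw [abs_of_nonpos h1, abs_of_nonpos h2, abs_of_nonpos (by linarith)]; ring
  rw [habs]
  have t1 : |(τ₁ + e * |ξ₁|) + (τ₂ - e * |ξ₂|) - ((τ₁ + τ₂) + e₃ * (|ξ₁| + |ξ₂|))| ≤
      abs (τ₁ + e * |ξ₁|) + abs (τ₂ - e * |ξ₂|) + abs ((τ₁ + τ₂) + e₃ * (|ξ₁| + |ξ₂|)) := by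
    calc _ ≤ abs ((τ₁ + e * |ξ₁|) + (τ₂ - e * |ξ₂|)) + abs ((τ₁ + τ₂) + e₃ * (|ξ₁| + |ξ₂|)) :=
          abs_sub _ _
      _ ≤ _ := by have := abs_add_le (τ₁ + e * |ξ₁|) (τ₂ - e * |ξ₂|); linarith
  have hm1 : min |ξ₁| |ξ₂| ≤ |ξ₁| := min_le_left _ _
  have hm2 : min |ξ₁| |ξ₂| ≤ |ξ₂| := min_le_right _ _
  rcases he with rfl | rfl <;> rcases he₃ with rfl | rfl
  · have h : (τ₁ + 1 * |ξ₁|) + (τ₂ - 1 * |ξ₂|) - ((τ₁ + τ₂) + 1 * (|ξ₁| + |ξ₂|)) =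
        -(2 * |ξ₂|) := by ring
    rw [h, abs_neg, abs_of_nonneg (by positivity)] at t1; linarith
  · have h : (τ₁ + 1 * |ξ₁|) + (τ₂ - 1 * |ξ₂|) - ((τ₁ + τ₂) + (-1) * (|ξ₁| + |ξ₂|)) =
        2 * |ξ₁| := by ring
    rw [h, abs_of_nonneg (by positivity)] at t1; linarith
  · have h : (τ₁ + (-1) * |ξ₁|) + (τ₂ - (-1) * |ξ₂|) - ((τ₁ + τ₂) + 1 * (|ξ₁| + |ξ₂|)) =
        -(2 * |ξ₁|) := by ring
    rw [h, abs_neg, abs_of_nonneg (by positivity)] at t1; linarith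
  · have h : (τ₁ + (-1) * |ξ₁|) + (τ₂ - (-1) * |ξ₂|) - ((τ₁ + τ₂) + (-1) * (|ξ₁| + |ξ₂|)) =
        2 * |ξ₂| := by ring
    rw [h, abs_of_nonneg (by positivity)] at t1; linarith
end

section
/- Let k < 1/2 be a real number. Then there is a constant c > 0 such that for all f, g ∈ L²(ℝ) the convolution f*g satisfies ∫_ℝ |(f*g)(ξ)|² ⟨ξ⟩^{2(k−1)} dξ ≤ c ‖f‖²_{L²(ℝ)} ‖g‖²_{L²(ℝ)}. Equivalently (taking f, g to be the Fourier transforms of u, v ∈ L²(ℝ)): ‖uv‖_{H^{k−1}(ℝ)} ≤ c' ‖u‖_{L²(ℝ)} ‖v‖_{L²(ℝ)} for k < 1/2. -/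
/-!
By Cauchy–Schwarz and translation invariance of Lebesgue measure, `|(f * g)(ξ)| ≤ ‖f‖₂ ‖g‖₂`
for every `ξ`, so the left-hand side is at most `‖f‖₂² ‖g‖₂² ∫ ⟨ξ⟩^{2(k-1)} dξ`, and this weight
is integrable on `ℝ` exactly because `2(1 - k) > 1`.
-/

open MeasureTheory
open scoped ENNReal

/-- Japanese bracket `⟨x⟩ = (1 + |x|²)^{1/2}`. -/
noncomputable def jb (x : ℝ) : ℝ := Real.sqrt (1 + x ^ 2)

section Convolution

variable {G 𝕜 : Type*} [MeasurableSpace G] [AddGroup G] [MeasurableAdd G] [MeasurableNeg G]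
  {μ : Measure G} [μ.IsAddLeftInvariant] [μ.IsNegInvariant] [NormedRing 𝕜] [NormedSpace ℝ 𝕜]
  {f g : G → 𝕜}

theorem enorm_integral_mul_sub_le (hf : AEStronglyMeasurable f μ)
    (hg : AEStronglyMeasurable g μ) (ξ : G) :
    ‖∫ η, f η * g (ξ - η) ∂μ‖ₑ ≤ eLpNorm f 2 μ * eLpNorm g 2 μ := by
  have hshift := Measure.measurePreserving_sub_left μ ξ
  calc ‖∫ η, f η * g (ξ - η) ∂μ‖ₑ
      ≤ eLpNorm (f • (g ∘ (ξ - ·))) 1 μ := by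
        rw [eLpNorm_one_eq_lintegral_enorm]
        exact enorm_integral_le_lintegral_enorm _
    _ ≤ eLpNorm f 2 μ * eLpNorm (g ∘ (ξ - ·)) 2 μ :=
        eLpNorm_smul_le_mul_eLpNorm (hg.comp_measurePreserving hshift) hf
    _ = eLpNorm f 2 μ * eLpNorm g 2 μ := by
        rw [eLpNorm_comp_measurePreserving hg hshift]

theorem lintegral_enorm_integral_mul_sub_sq_mul_le (hf : AEStronglyMeasurable f μ)
    (hg : AEStronglyMeasurable g μ) {w : G → ℝ≥0∞} (hw : AEMeasurable w μ) :
    ∫⁻ ξ, ‖∫ η, f η * g (ξ - η) ∂μ‖ₑ ^ 2 * w ξ ∂μ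
      ≤ eLpNorm f 2 μ ^ 2 * eLpNorm g 2 μ ^ 2 * ∫⁻ ξ, w ξ ∂μ := by
  calc ∫⁻ ξ, ‖∫ η, f η * g (ξ - η) ∂μ‖ₑ ^ 2 * w ξ ∂μ
      ≤ ∫⁻ ξ, (eLpNorm f 2 μ * eLpNorm g 2 μ) ^ 2 * w ξ ∂μ := by
        gcongr with ξ
        exact enorm_integral_mul_sub_le hf hg ξ
    _ = eLpNorm f 2 μ ^ 2 * eLpNorm g 2 μ ^ 2 * ∫⁻ ξ, w ξ ∂μ := by
        rw [lintegral_const_mul'' _ hw, mul_pow]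

end Convolution

theorem jb_rpow_eq (s x : ℝ) : jb x ^ s = (1 + ‖x‖ ^ 2) ^ (-(-s) / 2) := by
  rw [jb, Real.sqrt_eq_rpow, ← Real.rpow_mul (by positivity), Real.norm_eq_abs, sq_abs]
  ring_nf

theorem integrable_jb_rpow {s : ℝ} (hs : s < -1) : Integrable (fun x ↦ jb x ^ s) := by
  simp only [jb_rpow_eq s]
  refine integrable_rpow_neg_one_add_norm_sq ?_
  rw [Module.finrank_self, Nat.cast_one]
  linarith

theorem jb_pos (x : ℝ) : 0 < jb x :=
  Real.sqrt_pos.2 (by positivity)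

theorem integral_jb_rpow_pos {s : ℝ} (hs : s < -1) : 0 < ∫ x, jb x ^ s := by
  rw [integral_pos_iff_support_of_nonneg (fun x ↦ (Real.rpow_pos_of_pos (jb_pos x) s).le)
    (integrable_jb_rpow hs)]
  simp [Function.support, (Real.rpow_pos_of_pos (jb_pos _) s).ne']

theorem stmt10 (k : ℝ) (hk : k < 1/2) :
    ∃ c > (0:ℝ), ∀ f g : ℝ → ℂ, Measurable f → Measurable g →
      MemLp f 2 volume → MemLp g 2 volume →
      (∫⁻ ξ : ℝ, ENNReal.ofReal (‖∫ η : ℝ, f η * g (ξ - η)‖ ^ 2 * jb ξ ^ (2 * (k - 1))))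
        ≤ ENNReal.ofReal c * (eLpNorm f 2 volume) ^ 2 * (eLpNorm g 2 volume) ^ 2 := by
  have hs : 2 * (k - 1) < -1 := by linarith
  have hw := integrable_jb_rpow hs
  refine ⟨∫ ξ, jb ξ ^ (2 * (k - 1)), integral_jb_rpow_pos hs, fun f g hf hg _ _ ↦ ?_⟩
  rw [ofReal_integral_eq_lintegral_ofReal hw
    (.of_forall fun ξ ↦ (Real.rpow_pos_of_pos (jb_pos ξ) _).le)]
  calc (∫⁻ ξ : ℝ, ENNReal.ofReal (‖∫ η : ℝ, f η * g (ξ - η)‖ ^ 2 * jb ξ ^ (2 * (k - 1))))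
      = ∫⁻ ξ : ℝ, ‖∫ η : ℝ, f η * g (ξ - η)‖ₑ ^ 2 * ENNReal.ofReal (jb ξ ^ (2 * (k - 1))) := by
        refine lintegral_congr fun ξ ↦ ?_
        rw [ENNReal.ofReal_mul (by positivity), ENNReal.ofReal_pow (norm_nonneg _), ofReal_norm]
    _ ≤ _ := lintegral_enorm_integral_mul_sub_sq_mul_le hf.aestronglyMeasurable
        hg.aestronglyMeasurable hw.1.aemeasurable.ennreal_ofReal
    _ = _ := by ring
end

section
/- Let s > 1/2, b > 1/2 and e ∈ {−1, +1}. Then there is a constant c > 0 such that for all nonnegative functions f, g, h ∈ L²(ℝ²): ∫∫∫∫_{ℝ⁴} f(ξ₁,τ₁) g(ξ₂,τ₂) h(ξ₁+ξ₂, τ₁+τ₂) · ⟨ξ₁⟩^{−s} · ⟨τ₂ + e|ξ₂|⟩^{−b} dξ₁ dτ₁ dξ₂ dτ₂ ≤ c ‖f‖_{L²} ‖g‖_{L²} ‖h‖_{L²}. -/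
/-!
Write the integral as `∫ h(r) ∫ f(p) g(r - p) w(p, r - p) dp dr` with
`w(p, q) = ⟨ξ₁⟩^{-s} ⟨τ₂ + e|ξ₂|⟩^{-b}`. Cauchy–Schwarz in `p` bounds the inner integral by
`‖f(·) g(r - ·)‖₂ ‖w(·, r - ·)‖₂`. For fixed `ξ₁` the second factor depends on `τ₁` only through a
translate of `⟨τ⟩^{-b}`, so it equals `‖⟨·⟩^{-s}‖₂ ‖⟨·⟩^{-b}‖₂` for every `r`, which is finite because
`2s, 2b > 1`. Cauchy–Schwarz in `r` and Tonelli, `‖ ‖f(p) g(r - p)‖_{L²_p} ‖_{L²_r} = ‖f‖₂ ‖g‖₂`,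
finish the proof.
-/

open MeasureTheory

open scoped ENNReal

section L2

variable {α β : Type*} [MeasurableSpace α] [MeasurableSpace β] {μ : Measure α} {ν : Measure β}

lemma eLpNorm_two_eq_lintegral (F : α → ℝ≥0∞) :
    eLpNorm F 2 μ = (∫⁻ x, F x ^ (2 : ℝ) ∂μ) ^ (1 / 2 : ℝ) := by
  simpa using eLpNorm_nnreal_eq_lintegral (f := F) (μ := μ) (p := 2) two_ne_zero

lemma eLpNorm_two_sq (F : α → ℝ≥0∞) : eLpNorm F 2 μ ^ 2 = ∫⁻ x, F x ^ 2 ∂μ := by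
  simpa using eLpNorm_nnreal_pow_eq_lintegral (f := F) (μ := μ) (p := 2) two_ne_zero

lemma lintegral_mul_le_eLpNorm_two_mul {F G : α → ℝ≥0∞} (hF : AEMeasurable F μ)
    (hG : AEMeasurable G μ) : ∫⁻ x, F x * G x ∂μ ≤ eLpNorm F 2 μ * eLpNorm G 2 μ := by
  rw [eLpNorm_two_eq_lintegral, eLpNorm_two_eq_lintegral]
  exact ENNReal.lintegral_mul_le_Lp_mul_Lq μ Real.HolderConjugate.two_two hF hG

variable [SFinite ν]

lemma lintegral_prod_mul_comp {F : α → ℝ≥0∞} {G : β → ℝ≥0∞} {T : α → β → β}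
    (hF : Measurable F) (hG : Measurable G) (hT : Measurable (Function.uncurry T))
    (hTν : ∀ x, MeasurePreserving (T x) ν ν) :
    ∫⁻ z, F z.1 * G (T z.1 z.2) ∂μ.prod ν = (∫⁻ x, F x ∂μ) * ∫⁻ y, G y ∂ν := by
  rw [lintegral_prod (fun z => F z.1 * G (T z.1 z.2))
      ((hF.comp measurable_fst).mul (hG.comp hT)).aemeasurable,
    ← lintegral_mul_const _ hF]
  refine lintegral_congr fun x => ?_
  dsimp only
  rw [lintegral_const_mul (F x) (f := fun y => G (T x y)) (hG.comp (hTν x).measurable),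
    (hTν x).lintegral_comp hG]

lemma eLpNorm_two_prod_mul_comp {F : α → ℝ≥0∞} {G : β → ℝ≥0∞} {T : α → β → β}
    (hF : Measurable F) (hG : Measurable G) (hT : Measurable (Function.uncurry T))
    (hTν : ∀ x, MeasurePreserving (T x) ν ν) :
    eLpNorm (fun z => F z.1 * G (T z.1 z.2)) 2 (μ.prod ν) = eLpNorm F 2 μ * eLpNorm G 2 ν := by
  refine (ENNReal.pow_right_strictMono two_ne_zero).injective ?_
  simp only [mul_pow, eLpNorm_two_sq]
  exact lintegral_prod_mul_comp (hF.pow_const 2) (hG.pow_const 2) hT hTν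

variable [SFinite μ]

lemma eLpNorm_two_eLpNorm_two_eq_prod {Φ : α × β → ℝ≥0∞} (hΦ : Measurable Φ) :
    eLpNorm (fun y => eLpNorm (fun x => Φ (x, y)) 2 μ) 2 ν = eLpNorm Φ 2 (μ.prod ν) := by
  refine (ENNReal.pow_right_strictMono two_ne_zero).injective ?_
  simp only [eLpNorm_two_sq]
  exact (lintegral_prod_symm _ (hΦ.pow_const 2).aemeasurable).symm

end L2

section Convolution

variable {E : Type*} [MeasurableSpace E] [AddCommGroup E] [MeasurableAdd₂ E]
  {μ : Measure E} [SFinite μ] [μ.IsAddLeftInvariant]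

lemma lintegral_prod_add_eq_lintegral_lintegral {Ψ : E × E → ℝ≥0∞} (hΨ : Measurable Ψ) :
    ∫⁻ z, Ψ (z.1, z.1 + z.2) ∂μ.prod μ = ∫⁻ r, ∫⁻ p, Ψ (p, r) ∂μ ∂μ := by
  rw [(measurePreserving_prod_add μ μ).lintegral_comp hΨ, lintegral_prod_symm _ hΨ.aemeasurable]

variable [MeasurableNeg E]

lemma eLpNorm_two_eLpNorm_two_mul_sub {F G : E → ℝ≥0∞} (hF : Measurable F) (hG : Measurable G) :
    eLpNorm (fun r => eLpNorm (fun p => F p * G (r - p)) 2 μ) 2 μ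
      = eLpNorm F 2 μ * eLpNorm G 2 μ := by
  rw [eLpNorm_two_eLpNorm_two_eq_prod (Φ := fun z => F z.1 * G (z.2 - z.1)) (by fun_prop)]
  exact eLpNorm_two_prod_mul_comp (T := fun p r => r - p) hF hG (by fun_prop)
    fun p => measurePreserving_sub_right μ p

theorem lintegral_mul_mul_add_mul_le {F G H : E → ℝ≥0∞} {w : E × E → ℝ≥0∞} {K : ℝ≥0∞}
    (hF : Measurable F) (hG : Measurable G) (hH : Measurable H) (hw : Measurable w)
    (hK : ∀ r, eLpNorm (fun p => w (p, r - p)) 2 μ ≤ K) :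
    ∫⁻ z, F z.1 * G z.2 * H (z.1 + z.2) * w z ∂μ.prod μ
      ≤ K * eLpNorm F 2 μ * eLpNorm G 2 μ * eLpNorm H 2 μ := by
  set A : E → ℝ≥0∞ := fun r => eLpNorm (fun p => F p * G (r - p)) 2 μ
  have hA : Measurable A := by
    simp only [A, eLpNorm_two_eq_lintegral]
    exact (Measurable.lintegral_prod_right'
      (f := fun z : E × E => (F z.2 * G (z.1 - z.2)) ^ (2 : ℝ)) (by fun_prop)).pow_const _
  have hinner (r : E) : ∫⁻ p, F p * G (r - p) * w (p, r - p) ∂μ ≤ A r * K :=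
    (lintegral_mul_le_eLpNorm_two_mul (F := fun p => F p * G (r - p))
      (G := fun p => w (p, r - p)) (by fun_prop) (by fun_prop)).trans
      (mul_le_mul_right (hK r) _)
  calc ∫⁻ z, F z.1 * G z.2 * H (z.1 + z.2) * w z ∂μ.prod μ
      = ∫⁻ r, ∫⁻ p, H r * (F p * G (r - p) * w (p, r - p)) ∂μ ∂μ := by
        rw [← lintegral_prod_add_eq_lintegral_lintegral
          (Ψ := fun z => H z.2 * (F z.1 * G (z.2 - z.1) * w (z.1, z.2 - z.1))) (by fun_prop)]
        simp only [add_sub_cancel_left]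
        congr with z; ring
    _ = ∫⁻ r, H r * ∫⁻ p, F p * G (r - p) * w (p, r - p) ∂μ ∂μ := by
        congr with r; exact lintegral_const_mul _ (by fun_prop)
    _ ≤ ∫⁻ r, K * (H r * A r) ∂μ :=
        lintegral_mono fun r => (mul_le_mul_right (hinner r) _).trans_eq (by ring)
    _ ≤ K * (eLpNorm H 2 μ * eLpNorm A 2 μ) := by
        rw [lintegral_const_mul _ (by fun_prop)]
        exact mul_le_mul_right (lintegral_mul_le_eLpNorm_two_mul hH.aemeasurable hA.aemeasurable) _
    _ = K * eLpNorm F 2 μ * eLpNorm G 2 μ * eLpNorm H 2 μ := by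
        rw [eLpNorm_two_eLpNorm_two_mul_sub hF hG]; ring

end Convolution

lemma measurable_jb : Measurable jb := by
  unfold jb; fun_prop

lemma memLp_two_jb_rpow_neg {r : ℝ} (hr : 1 / 2 < r) : MemLp (fun x => jb x ^ (-r)) 2 volume := by
  refine (memLp_two_iff_integrable_sq (measurable_jb.pow_const _).aestronglyMeasurable).2 ?_
  have hsq (x : ℝ) : (jb x ^ (-r)) ^ 2 = ((1 : ℝ) + ‖x‖ ^ 2) ^ (-(2 * r) / 2) := by
    rw [jb, Real.rpow_pow_comm (Real.sqrt_nonneg _), Real.sq_sqrt (by positivity),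
      Real.norm_eq_abs, sq_abs]
    ring_nf
  simp only [hsq]
  exact integrable_rpow_neg_one_add_norm_sq (by simp; linarith)

lemma eLpNorm_two_mul_comp_sub_add {U V : ℝ → ℝ≥0∞} {ψ : ℝ → ℝ} (hU : Measurable U)
    (hV : Measurable V) (hψ : Measurable ψ) (r : ℝ × ℝ) :
    eLpNorm (fun p : ℝ × ℝ => U p.1 * V ((r - p).2 + ψ (r - p).1)) 2 volume
      = eLpNorm U 2 volume * eLpNorm V 2 volume := by
  have hshift (p : ℝ × ℝ) : (r - p).2 + ψ (r - p).1 = r.2 + ψ (r.1 - p.1) - p.2 := by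
    simp only [Prod.fst_sub, Prod.snd_sub]; ring
  simp only [hshift, Measure.volume_eq_prod]
  exact eLpNorm_two_prod_mul_comp (T := fun ξ τ => r.2 + ψ (r.1 - ξ) - τ) hU hV (by fun_prop)
    fun ξ => Measure.measurePreserving_sub_left volume _

theorem stmt11_general (s b : ℝ) (hs : 1/2 < s) (hb : 1/2 < b)
    (e : ℝ) :
    ∃ c > (0:ℝ), ∀ f g h : ℝ × ℝ → ℝ, Measurable f → Measurable g → Measurable h →
      (∀ x, 0 ≤ f x) → (∀ x, 0 ≤ g x) → (∀ x, 0 ≤ h x) →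
      MemLp f 2 volume → MemLp g 2 volume → MemLp h 2 volume →
      (∫⁻ p : (ℝ × ℝ) × (ℝ × ℝ),
        ENNReal.ofReal (f p.1 * g p.2 * h (p.1.1 + p.2.1, p.1.2 + p.2.2) *
          jb p.1.1 ^ (-s) * jb (p.2.2 + e * |p.2.1|) ^ (-b)))
      ≤ ENNReal.ofReal c * eLpNorm f 2 volume * eLpNorm g 2 volume * eLpNorm h 2 volume := by
  set K := eLpNorm (fun x => jb x ^ (-s)) 2 volume * eLpNorm (fun x => jb x ^ (-b)) 2 volume
  have hK : K ≠ ∞ := ENNReal.mul_ne_top (memLp_two_jb_rpow_neg hs).eLpNorm_ne_top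
    (memLp_two_jb_rpow_neg hb).eLpNorm_ne_top
  refine ⟨K.toReal + 1, by positivity, fun f g h hf hg hh _ _ _ _ _ _ => ?_⟩
  have hjb := measurable_jb
  calc (∫⁻ p : (ℝ × ℝ) × (ℝ × ℝ),
        ENNReal.ofReal (f p.1 * g p.2 * h (p.1.1 + p.2.1, p.1.2 + p.2.2) *
          jb p.1.1 ^ (-s) * jb (p.2.2 + e * |p.2.1|) ^ (-b)))
      ≤ ∫⁻ z, ‖f z.1‖ₑ * ‖g z.2‖ₑ * ‖h (z.1 + z.2)‖ₑ *
          (‖jb z.1.1 ^ (-s)‖ₑ * ‖jb (z.2.2 + e * |z.2.1|) ^ (-b)‖ₑ) ∂volume.prod volume :=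
        lintegral_mono fun z =>
          (Real.ofReal_le_enorm _).trans_eq (by simp only [enorm_mul, mul_assoc]; rfl)
    _ ≤ K * eLpNorm (‖f ·‖ₑ) 2 volume * eLpNorm (‖g ·‖ₑ) 2 volume * eLpNorm (‖h ·‖ₑ) 2 volume :=
        lintegral_mul_mul_add_mul_le hf.enorm hg.enorm hh.enorm (by fun_prop)
          fun r => (eLpNorm_two_mul_comp_sub_add (ψ := fun ξ => e * |ξ|)
            (hjb.pow_const _).enorm (hjb.pow_const _).enorm (by fun_prop) r).le
    _ ≤ ENNReal.ofReal (K.toReal + 1) * eLpNorm f 2 volume * eLpNorm g 2 volume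
          * eLpNorm h 2 volume := by
        simp only [eLpNorm_enorm]
        gcongr
        rw [ENNReal.ofReal_add ENNReal.toReal_nonneg zero_le_one, ENNReal.ofReal_toReal hK]
        exact le_self_add

theorem stmt11 (s b : ℝ) (hs : 1/2 < s) (hb : 1/2 < b)
    (e : ℝ) (he : e = 1 ∨ e = -1) :
    ∃ c > (0:ℝ), ∀ f g h : ℝ × ℝ → ℝ, Measurable f → Measurable g → Measurable h →
      (∀ x, 0 ≤ f x) → (∀ x, 0 ≤ g x) → (∀ x, 0 ≤ h x) →
      MemLp f 2 volume → MemLp g 2 volume → MemLp h 2 volume →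
      (∫⁻ p : (ℝ × ℝ) × (ℝ × ℝ),
        ENNReal.ofReal (f p.1 * g p.2 * h (p.1.1 + p.2.1, p.1.2 + p.2.2) *
          jb p.1.1 ^ (-s) * jb (p.2.2 + e * |p.2.1|) ^ (-b)))
      ≤ ENNReal.ofReal c * eLpNorm f 2 volume * eLpNorm g 2 volume * eLpNorm h 2 volume :=
  stmt11_general s b hs hb e
end
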